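/- Let U : ℝ × ℝ → Mₙ(ℂ) be continuously differentiable in (x, λ), and let Φ : ℝ × ℝ → Mₙ(ℂ) be twice continuously differentiable with Φ(x, λ) invertible for all (x, λ) and ∂ₓΦ(x, λ) = U(x, λ)·Φ(x, λ). Define the Sym–Tafel map r(x, λ) := Φ(x, λ)⁻¹ · ∂_λΦ(x, λ). Then ∂ₓ r(x, λ) = Φ(x, λ)⁻¹ · (∂_λU(x, λ)) · Φ(x, λ). -/

import Mathlib

attribute [local instance] Matrix.normedAddCommGroup Matrix.normedSpace

open Matrix

/-!
Put `Ψ = Φ⁻¹`. Differentiating `Ψ Φ = 1` gives `∂ₓΨ = -Ψ (∂ₓΦ) Ψ = -Ψ U`, and by symmetry of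
second derivatives `∂ₓ∂_λΦ = ∂_λ(UΦ) = (∂_λU) Φ + U ∂_λΦ`. In the product rule for
`∂ₓ(Ψ ∂_λΦ)` the two terms `∓ Ψ U ∂_λΦ` cancel, leaving `Ψ (∂_λU) Φ`. The computation holds in
any Banach algebra; since the sup norm on matrices is not submultiplicative, the matrix case is
transported there along `Matrix.toEuclideanCLM`.
-/

section BanachAlgebra

variable {𝕜 : Type*} [RCLike 𝕜] {E : Type*} [NormedAddCommGroup E] [NormedSpace 𝕜 E]
  {F : Type*} [NormedAddCommGroup F] [NormedSpace 𝕜 F]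

theorem fderiv_fderiv_apply_comm {f : E → F} {x : E} (hf : ContDiffAt 𝕜 2 f x) (v w : E) :
    fderiv 𝕜 (fun y => fderiv 𝕜 f y w) x v = fderiv 𝕜 (fun y => fderiv 𝕜 f y v) x w := by
  have hdf : DifferentiableAt 𝕜 (fderiv 𝕜 f) x :=
    (hf.fderiv_right (m := 1) le_rfl).differentiableAt one_ne_zero
  rw [fderiv_clm_apply hdf (differentiableAt_const w),
    fderiv_clm_apply hdf (differentiableAt_const v)]
  simpa using hf.isSymmSndFDerivAt (by simp) v w

variable {A : Type*} [NormedRing A] [NormedAlgebra 𝕜 A]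

theorem fderiv_fun_mul_apply {a b : E → A} {x : E} (ha : DifferentiableAt 𝕜 a x)
    (hb : DifferentiableAt 𝕜 b x) (v : E) :
    fderiv 𝕜 (fun y => a y * b y) x v = a x * fderiv 𝕜 b x v + fderiv 𝕜 a x v * b x := by
  simp [fderiv_fun_mul' ha hb]

variable [HasSummableGeomSeries A]

theorem fderiv_ringInverse_apply {Φ : E → A} {x : E} (hΦ : DifferentiableAt 𝕜 Φ x)
    (hx : IsUnit (Φ x)) (v : E) :
    fderiv 𝕜 (fun y => Ring.inverse (Φ y)) x v
      = -(Ring.inverse (Φ x) * fderiv 𝕜 Φ x v * Ring.inverse (Φ x)) := by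
  have h := (hasFDerivAt_ringInverse (𝕜 := 𝕜) hx.unit).comp x hΦ.hasFDerivAt
  rw [show (fun y => Ring.inverse (Φ y)) = Ring.inverse ∘ Φ from rfl, h.fderiv]
  simp [← Ring.inverse_unit]

theorem fderiv_symTafel_apply {U Φ : E → A} (hU : Differentiable 𝕜 U) (hΦ : ContDiff 𝕜 2 Φ)
    (hΦunit : ∀ y, IsUnit (Φ y)) {v : E} (hlin : ∀ y, fderiv 𝕜 Φ y v = U y * Φ y) (w x : E) :
    fderiv 𝕜 (fun y => Ring.inverse (Φ y) * fderiv 𝕜 Φ y w) x v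
      = Ring.inverse (Φ x) * fderiv 𝕜 U x w * Φ x := by
  have hΦd : Differentiable 𝕜 Φ := hΦ.differentiable (by simp)
  have hmixed : fderiv 𝕜 (fun y => fderiv 𝕜 Φ y w) x v
      = U x * fderiv 𝕜 Φ x w + fderiv 𝕜 U x w * Φ x := by
    rw [fderiv_fderiv_apply_comm hΦ.contDiffAt, funext hlin, fderiv_fun_mul_apply (hU x) (hΦd x)]
  have hGd : DifferentiableAt 𝕜 (fun y => fderiv 𝕜 Φ y w) x :=
    ((hΦ.fderiv_right (m := 1) le_rfl).clm_apply contDiff_const).differentiable one_ne_zero x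
  rw [fderiv_fun_mul_apply ((hΦd x).inverse (hΦunit x)) hGd, hmixed,
    fderiv_ringInverse_apply (hΦd x) (hΦunit x), hlin]
  linear_combination (norm := noncomm_ring)
    (-(Ring.inverse (Φ x) * U x)) * Ring.mul_inverse_cancel _ (hΦunit x) * fderiv 𝕜 Φ x w

end BanachAlgebra

theorem map_ringInverse {M N F : Type*} [MonoidWithZero M] [MonoidWithZero N] [EquivLike F M N]
    [MulEquivClass F M N] (f : F) (x : M) : f (Ring.inverse x) = Ring.inverse (f x) := by
  by_cases hx : IsUnit x
  · rw [← one_mul (Ring.inverse (f x)), Ring.eq_mul_inverse_iff_mul_eq _ _ _ (hx.map f),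
      ← map_mul, Ring.inverse_mul_cancel _ hx, map_one]
  · rw [Ring.inverse_non_unit _ hx, Ring.inverse_non_unit _ (by rwa [isUnit_map_iff]), map_zero]

namespace Matrix

variable {m : Type*} [Fintype m] [DecidableEq m]

noncomputable def toEuclideanCLMRestrictScalars :
    Matrix m m ℂ ≃L[ℝ] (EuclideanSpace ℂ m →L[ℂ] EuclideanSpace ℂ m) :=
  ((toEuclideanCLM (𝕜 := ℂ) (n := m)).toAlgEquiv.toLinearEquiv.restrictScalars ℝ
    ).toContinuousLinearEquiv

theorem contDiff_toEuclideanCLM {k : WithTop ℕ∞} :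
    ContDiff ℝ k (toEuclideanCLM (𝕜 := ℂ) (n := m)) :=
  (toEuclideanCLMRestrictScalars (m := m)).contDiff

theorem fderiv_toEuclideanCLM_comp_apply {E : Type*} [NormedAddCommGroup E] [NormedSpace ℝ E]
    (f : E → Matrix m m ℂ) (x v : E) :
    fderiv ℝ (fun y => toEuclideanCLM (𝕜 := ℂ) (f y)) x v
      = toEuclideanCLM (𝕜 := ℂ) (fderiv ℝ f x v) :=
  congrArg (· v) (toEuclideanCLMRestrictScalars.comp_fderiv (f := f) (x := x))

end Matrix

/-- **Tangent vectors of Sym–Tafel soliton surfaces.** If `∂ₓΦ(x,λ) = U(x,λ)·Φ(x,λ)` with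
`Φ` invertible-valued, then the Sym–Tafel map `r = Φ⁻¹·∂_λΦ` satisfies
`∂ₓr = Φ⁻¹·(∂_λU)·Φ`. Here points of `ℝ × ℝ` are `(x, λ)`, `∂ₓ` is the derivative in the
direction `(1,0)` and `∂_λ` in the direction `(0,1)`. -/
theorem sym_tafel_tangent_vector {n : ℕ}
    (U Φ : ℝ × ℝ → Matrix (Fin n) (Fin n) ℂ)
    (hU : ContDiff ℝ 1 U) (hΦ : ContDiff ℝ 2 Φ)
    (hΦinv : ∀ p, IsUnit (Φ p))
    (hlin : ∀ p, fderiv ℝ Φ p (1, 0) = U p * Φ p) :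
    ∀ p, fderiv ℝ (fun q => (Φ q)⁻¹ * fderiv ℝ Φ q (0, 1)) p (1, 0)
      = (Φ p)⁻¹ * fderiv ℝ U p (0, 1) * Φ p := by
  intro p
  have htransported := fderiv_symTafel_apply (U := fun q => toEuclideanCLM (𝕜 := ℂ) (U q))
    (Φ := fun q => toEuclideanCLM (𝕜 := ℂ) (Φ q)) (v := ((1 : ℝ), (0 : ℝ)))
    ((contDiff_toEuclideanCLM.comp hU).differentiable one_ne_zero)
    (contDiff_toEuclideanCLM.comp hΦ) (fun q => (hΦinv q).map _)
    (fun q => by rw [fderiv_toEuclideanCLM_comp_apply, hlin, map_mul]) (0, 1) p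
  simp only [fderiv_toEuclideanCLM_comp_apply, ← map_ringInverse, ← map_mul,
    ← nonsing_inv_eq_ringInverse] at htransported
  exact (toEuclideanCLM (𝕜 := ℂ) (n := Fin n)).injective htransported
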